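/- Let Z be a separable real Banach space, let φ : ℓ₁ → Z be a bounded linear surjection, and let i : ker φ → ℓ₁ be the inclusion. If every nonnegative continuous quadratic form q : ker φ → ℝ extends to a nonnegative continuous quadratic form Q : ℓ₁ → ℝ (i.e. Q ∘ i = q), then every short exact sequence 0 → ℓ₂ → Y → Z → 0 of real Banach spaces splits. -/

import Mathlib

/-!
Lift `φ` through `ρ` to `T : ℓ₁ → Y`, using that `ℓ₁` is projective. On `ker φ` the lift lands in
`ker ρ = j(ℓ₂)`, so it defines `σ : ker φ → ℓ₂`, and `‖σ ·‖²` is a nonnegative continuous quadratic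
form on `ker φ`. Let `B` be a symmetric bilinear form on `ℓ₁` whose quadratic form is a nonnegative
extension of it. By Cauchy–Schwarz, `‖B x‖ ≤ √‖B‖ ‖σ x‖` on `ker φ`, so `w ↦ B w` extends from the
dense subspace `σ(ker φ)` of `K = closure (range σ)` to `S : K → ℓ₁*`, and the Riesz adjoint
`τ : ℓ₁ → K` of `S` extends `σ` by polarization. Then `T - j τ` vanishes on `ker φ`, hence equals
`V φ` with `ρ V = id`, and `id - V ρ` factors through `j` as the required retraction.
-/

noncomputable section

/-- The real sequence space `ℓ₁(ℕ)`. -/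
abbrev ellOne : Type := lp (fun _ : ℕ => ℝ) 1

/-- The real sequence space `ℓ₂(ℕ)`. -/
abbrev ellTwo : Type := lp (fun _ : ℕ => ℝ) 2

/-- A continuous quadratic form on a real Banach space: `q x = b x x` for some
continuous bilinear form `b`. -/
def IsContQuadraticForm {X : Type*} [NormedAddCommGroup X] [NormedSpace ℝ X]
    (q : X → ℝ) : Prop :=
  ∃ b : X →L[ℝ] X →L[ℝ] ℝ, ∀ x, q x = b x x

/-- A bounded operator `T : X → Y` is 1-summing (absolutely summing). -/
def OneSumming {X Y : Type*} [NormedAddCommGroup X] [NormedSpace ℝ X]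
    [NormedAddCommGroup Y] [NormedSpace ℝ Y] (T : X →L[ℝ] Y) : Prop :=
  ∃ C : ℝ, 0 ≤ C ∧ ∀ (n : ℕ) (x : Fin n → X),
    ∑ k, ‖T (x k)‖ ≤ C * ⨆ ξ : {ξ : X →L[ℝ] ℝ // ‖ξ‖ ≤ 1}, ∑ k, |ξ.1 (x k)|

open scoped InnerProductSpace

theorem IsContQuadraticForm.exists_symm {X : Type*} [NormedAddCommGroup X] [NormedSpace ℝ X]
    {q : X → ℝ} (hq : IsContQuadraticForm q) :
    ∃ B : X →L[ℝ] X →L[ℝ] ℝ, (∀ x y, B x y = B y x) ∧ ∀ x, q x = B x x := by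
  obtain ⟨b, hb⟩ := hq
  refine ⟨(2⁻¹ : ℝ) • (b + b.flip), fun x y => ?_, fun x => ?_⟩ <;>
    simp only [smul_apply, add_apply, ContinuousLinearMap.flip_apply, smul_eq_mul, hb] <;> ring

theorem isContQuadraticForm_norm_sq {X H : Type*} [NormedAddCommGroup X] [NormedSpace ℝ X]
    [NormedAddCommGroup H] [InnerProductSpace ℝ H] (σ : X →L[ℝ] H) :
    IsContQuadraticForm fun x => ‖σ x‖ ^ 2 :=
  ⟨(innerSL ℝ).bilinearComp σ σ, fun x => by simp⟩

section LpOne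

variable {ι Y Z : Type*} [NormedAddCommGroup Y] [NormedSpace ℝ Y] [CompleteSpace Y]
  [NormedAddCommGroup Z] [NormedSpace ℝ Z]

local notation "ℓ¹(" ι ")" => lp (fun _ : ι => ℝ) 1

lemma lp_one_summable_norm (x : ℓ¹(ι)) : Summable fun i => ‖x i‖ := by
  simpa using (lp.memℓp x).summable (p := 1) (by norm_num)

lemma lp_one_norm_eq_tsum (x : ℓ¹(ι)) : ‖x‖ = ∑' i, ‖x i‖ := by
  simpa using lp.norm_eq_tsum_rpow (p := 1) (by norm_num) x

theorem lp_one_exists_hasSum_smul (y : ι → Y) (M : ℝ) (hy : ∀ i, ‖y i‖ ≤ M) :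
    ∃ T : ℓ¹(ι) →L[ℝ] Y, ∀ x, HasSum (fun i => x i • y i) (T x) := by
  have hle (x : ℓ¹(ι)) (i : ι) : ‖x i • y i‖ ≤ M * ‖x i‖ := by
    rw [norm_smul, mul_comm]
    exact mul_le_mul_of_nonneg_right (hy i) (norm_nonneg _)
  have hnorm (x : ℓ¹(ι)) : Summable fun i => ‖x i • y i‖ :=
    .of_nonneg_of_le (fun _ => norm_nonneg _) (hle x) ((lp_one_summable_norm x).mul_left M)
  have hsum (x : ℓ¹(ι)) : Summable fun i => x i • y i := (hnorm x).of_norm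
  let T : ℓ¹(ι) →ₗ[ℝ] Y :=
    { toFun x := ∑' i, x i • y i
      map_add' a b := by
        simp only [lp.coeFn_add, Pi.add_apply, add_smul, (hsum a).tsum_add (hsum b)]
      map_smul' c a := by
        simp only [lp.coeFn_smul, Pi.smul_apply, smul_eq_mul, mul_smul,
          (hsum a).tsum_const_smul c, RingHom.id_apply] }
  refine ⟨T.mkContinuous M fun x => ?_, fun x => (hsum x).hasSum⟩
  calc ‖T x‖ ≤ ∑' i, ‖x i • y i‖ := norm_tsum_le_tsum_norm (hnorm x)
    _ ≤ ∑' i, M * ‖x i‖ :=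
      (hnorm x).tsum_le_tsum (hle x) ((lp_one_summable_norm x).mul_left M)
    _ = M * ‖x‖ := by rw [tsum_mul_left, lp_one_norm_eq_tsum]

theorem lp_one_exists_lift [CompleteSpace Z] (φ : ℓ¹(ι) →L[ℝ] Z) (ρ : Y →L[ℝ] Z)
    (hρ : Function.Surjective ρ) : ∃ T : ℓ¹(ι) →L[ℝ] Y, ρ ∘L T = φ := by
  classical
  obtain ⟨C, hC0, hC⟩ := ρ.exists_preimage_norm_le hρ
  choose y hy hyC using fun i => hC (φ (lp.single 1 i 1))
  have hbound (i : ι) : ‖y i‖ ≤ C * ‖φ‖ := by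
    refine (hyC i).trans (mul_le_mul_of_nonneg_left ?_ hC0.le)
    simpa [lp.norm_single] using φ.le_opNorm (lp.single 1 i 1)
  obtain ⟨T, hT⟩ := lp_one_exists_hasSum_smul y _ hbound
  refine ⟨T, ContinuousLinearMap.ext fun x => ((hT x).mapL ρ).unique ?_⟩
  convert (lp.hasSum_single ENNReal.one_ne_top x).mapL φ using 1
  ext i
  rw [map_smul, hy, ← map_smul, ← lp.single_smul, smul_eq_mul, mul_one]

end LpOne

namespace ContinuousLinearMap

variable {E F G : Type*} [NormedAddCommGroup E] [NormedSpace ℝ E]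
  [NormedAddCommGroup F] [NormedSpace ℝ F] [NormedAddCommGroup G] [NormedSpace ℝ G]

theorem exists_comp_eq_of_range_subset [CompleteSpace E] [CompleteSpace F] (j : E →L[ℝ] F)
    (hj : Function.Injective j) (hjcl : IsClosed (Set.range j)) (T : G →L[ℝ] F)
    (hT : Set.range T ⊆ Set.range j) : ∃ σ : G →L[ℝ] E, j ∘L σ = T := by
  refine ⟨(j.equivRange hj hjcl).symm ∘L
    T.codRestrict (LinearMap.range (j : E →ₗ[ℝ] F)) fun x => hT ⟨x, rfl⟩, ?_⟩
  ext x
  exact congrArg Subtype.val ((j.equivRange hj hjcl).apply_symm_apply _)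

theorem exists_comp_eq_of_ker_le [CompleteSpace E] [CompleteSpace F] [CompleteSpace G]
    (φ : E →L[ℝ] F) (hφ : Function.Surjective φ) (U : E →L[ℝ] G)
    (hU : LinearMap.ker (φ : E →ₗ[ℝ] F) ≤ LinearMap.ker (U : E →ₗ[ℝ] G)) :
    ∃ V : F →L[ℝ] G, V ∘L φ = U := by
  obtain ⟨C, -, hC⟩ := φ.exists_preimage_norm_le hφ
  have hbound (x : E) : ‖U x‖ ≤ ‖U‖ * C * ‖φ x‖ := by
    obtain ⟨x', hx', hx'C⟩ := hC (φ x)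
    have hUx : U x = U x' := sub_eq_zero.1 <| by
      rw [← map_sub]
      exact hU (by simp [hx'])
    calc ‖U x‖ = ‖U x'‖ := by rw [hUx]
      _ ≤ ‖U‖ * ‖x'‖ := U.le_opNorm x'
      _ ≤ ‖U‖ * C * ‖φ x‖ := by rw [mul_assoc]; gcongr
  exact ⟨(U : E →ₗ[ℝ] G).extendOfNorm φ, ext fun x =>
    LinearMap.extendOfNorm_eq hφ.denseRange ⟨_, hbound⟩ x⟩

end ContinuousLinearMap

section Exact

variable {E Y Z : Type*} [NormedAddCommGroup E] [NormedSpace ℝ E] [NormedAddCommGroup Y]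
  [NormedSpace ℝ Y] [NormedAddCommGroup Z] [NormedSpace ℝ Z] {j : E →L[ℝ] Y} {ρ : Y →L[ℝ] Z}

lemma apply_eq_zero_of_ker_eq_range
    (hker : (LinearMap.ker (ρ : Y →ₗ[ℝ] Z) : Set Y) = Set.range j) (v : E) : ρ (j v) = 0 :=
  (hker.symm ▸ ⟨v, rfl⟩ : j v ∈ (LinearMap.ker (ρ : Y →ₗ[ℝ] Z) : Set Y))

theorem exists_retraction_of_comp_eq_id [CompleteSpace E] [CompleteSpace Y]
    (hj : Function.Injective j) (hjcl : IsClosed (Set.range j))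
    (hker : (LinearMap.ker (ρ : Y →ₗ[ℝ] Z) : Set Y) = Set.range j)
    (V : Z →L[ℝ] Y) (hV : ρ ∘L V = ContinuousLinearMap.id ℝ Z) :
    ∃ R : Y →L[ℝ] E, ∀ v, R (j v) = v := by
  have hP : Set.range (ContinuousLinearMap.id ℝ Y - V ∘L ρ) ⊆ Set.range j := by
    rintro - ⟨y, rfl⟩
    rw [← hker]
    simpa [sub_eq_zero] using congr($hV (ρ y)).symm
  obtain ⟨R, hR⟩ := j.exists_comp_eq_of_range_subset hj hjcl _ hP
  refine ⟨R, fun v => hj ?_⟩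
  simpa [apply_eq_zero_of_ker_eq_range hker] using congr($hR (j v))

end Exact

section HilbertExtension

variable {X H : Type*} [NormedAddCommGroup X] [NormedSpace ℝ X]
  [NormedAddCommGroup H] [InnerProductSpace ℝ H] [CompleteSpace H]

lemma abs_apply_le_sqrt_mul_sqrt (B : X →L[ℝ] X →L[ℝ] ℝ) (hB : ∀ x y, B x y = B y x)
    (hB0 : ∀ x, 0 ≤ B x x) (x y : X) : |B x y| ≤ √(B x x) * √(B y y) := by
  rw [← Real.sqrt_mul (hB0 x)]
  exact Real.abs_le_sqrt <| LinearMap.BilinForm.apply_sq_le_of_symm B.toLinearMap₁₂ hB0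
    ⟨fun x y => by simpa using hB x y⟩ x y

lemma norm_apply_le_sqrt_mul_sqrt (B : X →L[ℝ] X →L[ℝ] ℝ) (hB : ∀ x y, B x y = B y x)
    (hB0 : ∀ x, 0 ≤ B x x) (x : X) : ‖B x‖ ≤ √‖B‖ * √(B x x) := by
  refine (B x).opNorm_le_bound (by positivity) fun y => ?_
  have hy : B y y ≤ ‖B‖ * ‖y‖ ^ 2 := by
    simpa [sq, mul_assoc] using (le_abs_self _).trans (B.le_opNorm₂ y y)
  calc ‖B x y‖ ≤ √(B x x) * √(B y y) := abs_apply_le_sqrt_mul_sqrt B hB hB0 x y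
    _ ≤ √(B x x) * (√‖B‖ * ‖y‖) := by
      gcongr
      rw [← Real.sqrt_sq (norm_nonneg y), ← Real.sqrt_mul (norm_nonneg B)]
      exact Real.sqrt_le_sqrt hy
    _ = √‖B‖ * √(B x x) * ‖y‖ := by ring

theorem Submodule.exists_extension_of_apply_self_eq_norm_sq (D : Submodule ℝ X)
    (σ : D →ₗ[ℝ] H) (B : X →L[ℝ] X →L[ℝ] ℝ) (hB : ∀ x y, B x y = B y x) (hB0 : ∀ x, 0 ≤ B x x)
    (hσ : ∀ w : D, B w w = ‖σ w‖ ^ 2) : ∃ τ : X →L[ℝ] H, ∀ w : D, τ w = σ w := by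
  set K := (LinearMap.range σ).topologicalClosure
  let σK : D →ₗ[ℝ] K :=
    σ.codRestrict K fun w => Submodule.le_topologicalClosure _ (LinearMap.mem_range_self σ w)
  have hdense : DenseRange σK :=
    ((denseRange_inclusion_iff (Submodule.le_topologicalClosure (LinearMap.range σ))).2
      subset_rfl).comp σ.surjective_rangeRestrict.denseRange (continuous_inclusion _)
  have hbound (w : D) : ‖(B : X →ₗ[ℝ] X →L[ℝ] ℝ) w‖ ≤ √‖B‖ * ‖σK w‖ := by
    simpa [hσ, σK] using norm_apply_le_sqrt_mul_sqrt B hB hB0 w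
  let S : K →L[ℝ] X →L[ℝ] ℝ := ((B : X →ₗ[ℝ] X →L[ℝ] ℝ) ∘ₗ D.subtype).extendOfNorm σK
  have hS (w : D) : S (σK w) = B w := LinearMap.extendOfNorm_eq hdense ⟨_, hbound⟩ w
  let τK : X →L[ℝ] K :=
    (InnerProductSpace.toDual ℝ K).symm.toContinuousLinearEquiv.toContinuousLinearMap ∘L S.flip
  refine ⟨K.subtypeL ∘L τK, fun w => ?_⟩
  suffices τK w = σK w from congrArg Subtype.val this
  refine ext_inner_right ℝ fun k => hdense.induction_on k ?_ fun w' => ?_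
  · exact isClosed_eq (by fun_prop) (by fun_prop)
  · have hpol : B w w' = ⟪σ w, σ w'⟫_ℝ := by
      rw [real_inner_eq_norm_add_mul_self_sub_norm_mul_self_sub_norm_mul_self_div_two, ← map_add,
        ← sq, ← sq, ← sq, ← hσ, ← hσ, ← hσ]
      simp only [Submodule.coe_add, map_add, add_apply, hB w' w]
      ring
    show ⟪(InnerProductSpace.toDual ℝ K).symm (S.flip w), σK w'⟫_ℝ = _
    rw [InnerProductSpace.toDual_symm_apply, ContinuousLinearMap.flip_apply, hS, hB, hpol]
    rfl

end HilbertExtension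

theorem quadratic_extension_implies_splitting_general (Z : Type*) [NormedAddCommGroup Z]
    [NormedSpace ℝ Z] [CompleteSpace Z]
    (φ : ellOne →L[ℝ] Z) (hφ : Function.Surjective φ)
    (hext : ∀ q : (LinearMap.ker (φ : ellOne →ₗ[ℝ] Z)) → ℝ, IsContQuadraticForm q → (∀ x, 0 ≤ q x) →
      ∃ Q : ellOne → ℝ, IsContQuadraticForm Q ∧ (∀ x, 0 ≤ Q x) ∧
        ∀ x : LinearMap.ker (φ : ellOne →ₗ[ℝ] Z), Q (x : ellOne) = q x) :
    ∀ (Y : Type) (_ : NormedAddCommGroup Y) (_ : NormedSpace ℝ Y)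
      (_ : CompleteSpace Y) (j : ellTwo →L[ℝ] Y) (ρ : Y →L[ℝ] Z),
      Function.Injective j → IsClosed (Set.range j) → Function.Surjective ρ →
      (LinearMap.ker (ρ : Y →ₗ[ℝ] Z) : Set Y) = Set.range j →
      ∃ R : Y →L[ℝ] ellTwo, ∀ v : ellTwo, R (j v) = v := by
  intro Y _ _ _ j ρ hj hjcl hρ hker
  obtain ⟨T, hT⟩ := lp_one_exists_lift φ ρ hρ
  set N := LinearMap.ker (φ : ellOne →ₗ[ℝ] Z)
  obtain ⟨σ, hσ⟩ := j.exists_comp_eq_of_range_subset hj hjcl (T ∘L N.subtypeL) <| by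
    rintro - ⟨w, rfl⟩
    rw [← hker]
    simpa using congr($hT w).trans w.2
  obtain ⟨Q, hQ, hQ0, hQσ⟩ :=
    hext _ (isContQuadraticForm_norm_sq σ) fun _ => sq_nonneg _
  obtain ⟨B, hB, hQB⟩ := hQ.exists_symm
  obtain ⟨τ, hτ⟩ := N.exists_extension_of_apply_self_eq_norm_sq (σ : N →ₗ[ℝ] ellTwo) B
    hB (fun x => hQB x ▸ hQ0 x) fun w => (hQB w).symm.trans (hQσ w)
  obtain ⟨V, hV⟩ := φ.exists_comp_eq_of_ker_le hφ (T - j ∘L τ) fun w hw => by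
    simpa [sub_eq_zero, hτ ⟨w, hw⟩] using congr($hσ ⟨w, hw⟩).symm
  refine exists_retraction_of_comp_eq_id hj hjcl hker V <| ContinuousLinearMap.ext fun z => ?_
  obtain ⟨x, rfl⟩ := hφ z
  calc ρ (V (φ x)) = ρ (T x) := by simpa [apply_eq_zero_of_ker_eq_range hker] using congr(ρ ($hV x))
    _ = φ x := congr($hT x)

/-- If every nonnegative continuous quadratic form on `ker φ` extends to a nonnegative
continuous quadratic form on `ℓ₁`, then every short exact sequence
`0 → ℓ₂ → Y → Z → 0` splits. -/
theorem quadratic_extension_implies_splitting (Z : Type*) [NormedAddCommGroup Z]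
    [NormedSpace ℝ Z] [CompleteSpace Z] [TopologicalSpace.SeparableSpace Z]
    (φ : ellOne →L[ℝ] Z) (hφ : Function.Surjective φ)
    (hext : ∀ q : (LinearMap.ker (φ : ellOne →ₗ[ℝ] Z)) → ℝ, IsContQuadraticForm q → (∀ x, 0 ≤ q x) →
      ∃ Q : ellOne → ℝ, IsContQuadraticForm Q ∧ (∀ x, 0 ≤ Q x) ∧
        ∀ x : LinearMap.ker (φ : ellOne →ₗ[ℝ] Z), Q (x : ellOne) = q x) :
    ∀ (Y : Type) (_ : NormedAddCommGroup Y) (_ : NormedSpace ℝ Y)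
      (_ : CompleteSpace Y) (j : ellTwo →L[ℝ] Y) (ρ : Y →L[ℝ] Z),
      Function.Injective j → IsClosed (Set.range j) → Function.Surjective ρ →
      (LinearMap.ker (ρ : Y →ₗ[ℝ] Z) : Set Y) = Set.range j →
      ∃ R : Y →L[ℝ] ellTwo, ∀ v : ellTwo, R (j v) = v :=
  quadratic_extension_implies_splitting_general Z φ hφ hext
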